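/- arXiv:2305.05345 — 3 statements merged into one kernel-verified Lean document; each statement's English description precedes it below -/
import Mathlib

section
/- Let A, E be F_q-subspaces of F_{q^m} of dimensions d and r, and S ⊆ A.E with dim(S) = dim(A.E) - c. Then for every nonzero b ∈ E, the cardinality of (S·b^{-1}) ∩ (A \ {0}) is at least q^{d-c} - 1. -/
open Submodule Module

/-- The product space A.E: the F_q-span of all products a*e with a ∈ A, e ∈ E. -/
def prodSpace (Fq : Type*) {K : Type*} [Field Fq] [Field K] [Algebra Fq K]
    (A E : Submodule Fq K) : Submodule Fq K :=
  Submodule.span Fq {x : K | ∃ a ∈ A, ∃ e ∈ E, x = a * e}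

/-! Both `S·b⁻¹` and `A = (A·b)·b⁻¹` lie in `(A.E)·b⁻¹`, a space of dimension `dim S + c`, so by the
dimension formula `S·b⁻¹ ∩ A` has dimension at least `d - c` and hence at least `q^(d-c) - 1`
nonzero vectors. -/

theorem Submodule.natCard_diff_zero {F V : Type*} [Field F] [Fintype F] [AddCommGroup V]
    [Module F V] (W : Submodule F V) [FiniteDimensional F W] :
    Nat.card ((W : Set V) \ {0} : Set V) = Fintype.card F ^ finrank F W - 1 := by
  have : Finite W := Module.finite_of_finite F
  rw [Nat.card_coe_set_eq, Set.ncard_sdiff_singleton_of_mem W.zero_mem, ← Nat.card_coe_set_eq,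
    SetLike.coe_sort_coe, Module.natCard_eq_pow_finrank (K := F), Nat.card_eq_fintype_card]

theorem Submodule.finrank_map_mulRight {F K : Type*} [Field F] [DivisionRing K] [Algebra F K]
    (W : Submodule F K) {b : K} (hb : b ≠ 0) :
    finrank F (W.map (LinearMap.mulRight F b)) = finrank F W :=
  LinearEquiv.finrank_map_eq ((Units.mk0 b hb).mulRightLinearEquiv F) W

theorem le_map_mulRight_inv_prodSpace {F K : Type*} [Field F] [Field K] [Algebra F K]
    (A E : Submodule F K) {b : K} (hb : b ∈ E) (hb0 : b ≠ 0) :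
    A ≤ (prodSpace F A E).map (LinearMap.mulRight F b⁻¹) := fun a ha =>
  ⟨a * b, subset_span ⟨a, ha, b, hb, rfl⟩, by simp [mul_assoc, mul_inv_cancel₀ hb0]⟩

theorem stmt5_general (Fq K : Type*) [Field Fq] [Fintype Fq] [Field K] [Algebra Fq K]
    [FiniteDimensional Fq K]
    (A E S : Submodule Fq K) (d c : ℕ)
    (hA : finrank Fq A = d)
    (hSle : S ≤ prodSpace Fq A E)
    (hS : finrank Fq S + c = finrank Fq (prodSpace Fq A E))
    (b : K) (hb : b ∈ E) (hb0 : b ≠ 0) :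
    Fintype.card Fq ^ (d - c) - 1
      ≤ Nat.card (↑(S.map (LinearMap.mulRight Fq b⁻¹)) ∩ ((A : Set K) \ {0}) : Set K) := by
  set T := S.map (LinearMap.mulRight Fq b⁻¹)
  have hT : finrank Fq T = finrank Fq S := S.finrank_map_mulRight (inv_ne_zero hb0)
  have hsup : finrank Fq ↥(T ⊔ A) ≤ finrank Fq (prodSpace Fq A E) :=
    calc finrank Fq ↥(T ⊔ A)
        ≤ finrank Fq ((prodSpace Fq A E).map (LinearMap.mulRight Fq b⁻¹)) :=
          finrank_mono (sup_le (map_mono hSle) (le_map_mulRight_inv_prodSpace A E hb hb0))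
      _ = finrank Fq (prodSpace Fq A E) := finrank_map_mulRight _ (inv_ne_zero hb0)
  have hinf : d - c ≤ finrank Fq ↥(T ⊓ A) := by
    have := finrank_sup_add_finrank_inf_eq T A
    omega
  rw [← Set.inter_sdiff_assoc, ← coe_inf, (T ⊓ A).natCard_diff_zero]
  exact Nat.sub_le_sub_right (Nat.pow_le_pow_right Fintype.card_pos hinf) 1

theorem stmt5 (Fq K : Type*) [Field Fq] [Fintype Fq] [Field K] [Algebra Fq K]
    [FiniteDimensional Fq K]
    (A E S : Submodule Fq K) (d r c : ℕ)
    (hA : finrank Fq A = d) (hE : finrank Fq E = r)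
    (hSle : S ≤ prodSpace Fq A E)
    (hS : finrank Fq S + c = finrank Fq (prodSpace Fq A E))
    (b : K) (hb : b ∈ E) (hb0 : b ≠ 0) :
    Fintype.card Fq ^ (d - c) - 1
      ≤ Nat.card (↑(S.map (LinearMap.mulRight Fq b⁻¹)) ∩ ((A : Set K) \ {0}) : Set K) :=
  stmt5_general Fq K A E S d c hA hSle hS b hb hb0
end

section
/- Let A, E be F_q-subspaces of F_{q^m} of dimensions d and r, S a subspace of A.E with dim(S) = dim(A.E) - c, and a_1, ..., a_t nonzero elements of A. Then dim(S·a_1^{-1} ∩ ... ∩ S·a_t^{-1} ∩ E) ≥ r - tc. -/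
/-!
Multiplication by `a ≠ 0` is a linear automorphism, so `S·a⁻¹ ∩ E` has the dimension of
`S ∩ a·E`. Both `S` and `a·E ≅ E` lie in `A.E`, and `S` has codimension `c` there, so
`S ∩ a·E` has codimension at most `c` in `a·E`; hence each `S·aᵢ⁻¹ ∩ E` has codimension at
most `c` in `E`, and intersecting `t` such subspaces of `E` loses at most `t c` dimensions.
-/

open Submodule Module

section Codimension

variable {k V : Type*} [DivisionRing k] [AddCommGroup V] [Module k V]

theorem Submodule.finrank_map_symm_inf (e : V ≃ₗ[k] V) (S E : Submodule k V) :
    finrank k (S.map (e.symm : V →ₗ[k] V) ⊓ E : Submodule k V) =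
      finrank k (S ⊓ E.map (e : V →ₗ[k] V) : Submodule k V) := by
  rw [← e.finrank_map_eq, map_inf _ e.injective, ← map_comp,
    LinearEquiv.comp_coe, LinearEquiv.symm_trans_self, LinearEquiv.refl_toLinearMap,
    map_id]

variable [FiniteDimensional k V]

theorem Submodule.finrank_add_finrank_le_finrank_inf_add {U W P : Submodule k V}
    (hU : U ≤ P) (hW : W ≤ P) :
    finrank k U + finrank k W ≤ finrank k (U ⊓ W : Submodule k V) + finrank k P := by
  have hsup : finrank k (U ⊔ W : Submodule k V) ≤ finrank k P :=
    finrank_mono (sup_le hU hW)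
  have := finrank_sup_add_finrank_inf_eq U W
  omega

theorem Submodule.finrank_le_finrank_biInf_inf_add_card_mul {ι : Type*} (E : Submodule k V)
    (W : ι → Submodule k V) (c : ℕ) (s : Finset ι)
    (hW : ∀ i ∈ s, finrank k E ≤ finrank k (W i ⊓ E : Submodule k V) + c) :
    finrank k E ≤ finrank k ((⨅ i ∈ s, W i) ⊓ E : Submodule k V) + s.card * c := by
  classical
  induction s using Finset.induction_on with
  | empty =>
    rw [show (⨅ i ∈ (∅ : Finset ι), W i) = ⊤ by simp, top_inf_eq]
    omega
  | insert j s hjs ih =>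
    have hR := ih fun i hi ↦ hW i (Finset.mem_insert_of_mem hi)
    have hj := hW j (Finset.mem_insert_self j s)
    have hinf := finrank_add_finrank_le_finrank_inf_add (P := E) (inf_le_right (a := W j))
      (inf_le_right (a := ⨅ i ∈ s, W i))
    rw [inf_inf_inf_comm, inf_idem, ← Finset.iInf_insert] at hinf
    rw [Finset.card_insert_of_notMem hjs, add_mul, one_mul]
    omega

theorem Submodule.finrank_le_finrank_iInf_inf_add_card_mul {ι : Type*} [Fintype ι]
    (E : Submodule k V) (W : ι → Submodule k V) (c : ℕ)
    (hW : ∀ i, finrank k E ≤ finrank k (W i ⊓ E : Submodule k V) + c) :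
    finrank k E ≤ finrank k ((⨅ i, W i) ⊓ E : Submodule k V) + Fintype.card ι * c := by
  have h := finrank_le_finrank_biInf_inf_add_card_mul E W c Finset.univ fun i _ ↦ hW i
  rwa [show (⨅ i ∈ Finset.univ, W i) = ⨅ i, W i by simp, Finset.card_univ] at h

end Codimension

theorem map_mulRight_le_prodSpace {Fq K : Type*} [Field Fq] [Field K] [Algebra Fq K]
    {A : Submodule Fq K} (E : Submodule Fq K) {a : K} (ha : a ∈ A) :
    E.map (LinearMap.mulRight Fq a) ≤ prodSpace Fq A E := by
  rintro _ ⟨e, he, rfl⟩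
  exact subset_span ⟨a, ha, e, he, mul_comm e a⟩

theorem finrank_le_finrank_map_mulRight_inv_inf_add {Fq K : Type*} [Field Fq] [Field K]
    [Algebra Fq K] [FiniteDimensional Fq K] {A E S : Submodule Fq K} {c : ℕ}
    (hSle : S ≤ prodSpace Fq A E) (hS : finrank Fq S + c = finrank Fq (prodSpace Fq A E))
    {a : K} (ha : a ∈ A) (ha0 : a ≠ 0) :
    finrank Fq E ≤ finrank Fq (S.map (LinearMap.mulRight Fq a⁻¹) ⊓ E : Submodule Fq K) + c := by
  let u := (Units.mk0 a ha0).mulRightLinearEquiv Fq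
  have hcodim := finrank_add_finrank_le_finrank_inf_add (W := E.map (u : K →ₗ[Fq] K)) hSle
    (map_mulRight_le_prodSpace E ha)
  change finrank Fq E ≤ finrank Fq (S.map (u.symm : K →ₗ[Fq] K) ⊓ E : Submodule Fq K) + c
  rw [u.finrank_map_eq] at hcodim
  rw [finrank_map_symm_inf]
  omega

theorem stmt6_general (Fq K : Type*) [Field Fq] [Field K] [Algebra Fq K]
    [FiniteDimensional Fq K]
    (A E S : Submodule Fq K) (r c t : ℕ)
    (hE : finrank Fq E = r)
    (hSle : S ≤ prodSpace Fq A E)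
    (hS : finrank Fq S + c = finrank Fq (prodSpace Fq A E))
    (a : Fin t → K) (ha : ∀ i, a i ∈ A) (ha0 : ∀ i, a i ≠ 0) :
    r - t * c ≤ finrank Fq
      ((⨅ i, S.map (LinearMap.mulRight Fq (a i)⁻¹)) ⊓ E : Submodule Fq K) := by
  subst hE
  have hcodim := E.finrank_le_finrank_iInf_inf_add_card_mul _ c fun i ↦
    finrank_le_finrank_map_mulRight_inv_inf_add hSle hS (ha i) (ha0 i)
  rw [Fintype.card_fin] at hcodim
  omega

theorem stmt6 (Fq K : Type*) [Field Fq] [Fintype Fq] [Field K] [Algebra Fq K]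
    [FiniteDimensional Fq K]
    (A E S : Submodule Fq K) (d r c t : ℕ)
    (hA : finrank Fq A = d) (hE : finrank Fq E = r)
    (hSle : S ≤ prodSpace Fq A E)
    (hS : finrank Fq S + c = finrank Fq (prodSpace Fq A E))
    (a : Fin t → K) (ha : ∀ i, a i ∈ A) (ha0 : ∀ i, a i ≠ 0) :
    r - t * c ≤ finrank Fq
      ((⨅ i, S.map (LinearMap.mulRight Fq (a i)⁻¹)) ⊓ E : Submodule Fq K) :=
  stmt6_general Fq K A E S r c t hE hSle hS a ha ha0
end

section
/- Let E be an F_q-subspace of F_{q^m} of dimension r and let R_1, ..., R_t be subspaces of the quotient space V = F_{q^m}/E, each of dimension at most rd - r, chosen independently and uniformly at random among subspaces of those dimensions. Then the probability that R_1 ∩ ... ∩ R_t ≠ {0} is at most (q^{rd-r} - 1)·((q^{rd-r} - 1)/(q^{m-r} - 1))^{t-1}. -/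
/-!
Let `𝒮` be the set of subspaces of dimension at most `k` and `c` the number of them that contain
a given nonzero vector. Since `GL(V)` acts transitively on `V ∖ {0}` and preserves `𝒮`, `c` does
not depend on the vector. Double counting the incidences `y ∈ R` (`y ≠ 0`, `R ∈ 𝒮`) gives
`c (|V| - 1) ≤ |𝒮| (q^k - 1)`, so a uniform `R ∈ 𝒮` contains a fixed nonzero vector with
probability at most `(q^k - 1) / (|V| - 1)`. The members of a tuple with nonzero intersection all
contain some common `y ≠ 0`, and the union bound over `y` gives the probability bound
`(|V| - 1) (c / |𝒮|)^t`.
-/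

open Submodule Module Finset

theorem Nat.card_subtype_pi {ι α : Type*} [Fintype ι] (p : α → Prop) :
    Nat.card {f : ι → α // ∀ i, p (f i)} = Nat.card {a // p a} ^ Fintype.card ι := by
  rw [Nat.card_congr (Equiv.subtypePiEquivPi (p := fun _ => p)), Nat.card_fun,
    Nat.card_eq_fintype_card (α := ι)]

theorem Nat.card_subtype_eq_card_filter {α : Type*} [Fintype α] (p : α → Prop)
    [DecidablePred p] : Nat.card {a // p a} = #{a | p a} :=
  Nat.card_eq_fintype_card.trans (Fintype.card_subtype p)

section
variable {K V : Type*} [Field K] [AddCommGroup V] [Module K V]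

theorem exists_linearEquiv_apply_eq_of_ne_zero {y z : V} (hy : y ≠ 0) (hz : z ≠ 0) :
    ∃ g : V ≃ₗ[K] V, g y = z := by
  let ey := LinearEquiv.toSpanNonzeroSingleton K V y hy
  obtain ⟨g, hg⟩ := exists_linearEquiv_restrict_eq
    (ey.symm ≪≫ₗ LinearEquiv.toSpanNonzeroSingleton K V z hz)
  have h := hg (ey 1)
  rw [LinearEquiv.trans_apply, LinearEquiv.symm_apply_apply] at h
  exact ⟨g, by simpa [ey] using h.symm⟩

theorem finrank_map_linearEquiv_le {k : ℕ} (g : V ≃ₗ[K] V) {R : Submodule K V}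
    (hR : finrank K R ≤ k) : finrank K (R.map (g : V →ₗ[K] V)) ≤ k :=
  (LinearEquiv.finrank_map_eq g R).trans_le hR

variable [Finite V] {P : Submodule K V → Prop}

theorem card_subtype_mem_le_of_ne_zero
    (hP : ∀ (g : V ≃ₗ[K] V) R, P R → P (R.map (g : V →ₗ[K] V)))
    {y z : V} (hy : y ≠ 0) (hz : z ≠ 0) :
    Nat.card {R // P R ∧ y ∈ R} ≤ Nat.card {R // P R ∧ z ∈ R} := by
  obtain ⟨g, rfl⟩ := exists_linearEquiv_apply_eq_of_ne_zero (K := K) hy hz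
  refine Nat.card_le_card_of_injective
    (fun R => ⟨R.1.map (g : V →ₗ[K] V), hP g _ R.2.1, mem_map_of_mem R.2.2⟩) fun R R' h => ?_
  exact Subtype.ext (map_injective_of_injective g.injective (congrArg Subtype.val h))

theorem card_subtype_mem_mul_le (hP : ∀ (g : V ≃ₗ[K] V) R, P R → P (R.map (g : V →ₗ[K] V)))
    {y : V} (hy : y ≠ 0) {N : ℕ} (hN : ∀ R, P R → Nat.card R ≤ N) :
    Nat.card {R // P R ∧ y ∈ R} * (Nat.card V - 1) ≤ Nat.card {R // P R} * (N - 1) := by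
  classical
  have := Fintype.ofFinite V
  have := Fintype.ofFinite (Submodule K V)
  have key := card_mul_le_card_mul (s := {z : V | z ≠ 0}) (t := {R | P R})
    (r := fun z R => z ∈ R) (m := Nat.card {R // P R ∧ y ∈ R}) (n := N - 1) ?_ ?_
  · rwa [filter_ne', card_erase_of_mem (mem_univ _), card_univ, mul_comm,
      ← Nat.card_eq_fintype_card, ← Nat.card_subtype_eq_card_filter] at key
  · intro z hz
    rw [bipartiteAbove, filter_filter, ← Nat.card_subtype_eq_card_filter]
    exact card_subtype_mem_le_of_ne_zero hP hy (mem_filter.1 hz).2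
  · intro R hR
    rw [bipartiteBelow, filter_filter]
    calc #{z : V | z ≠ 0 ∧ z ∈ R} = #{z : V | z ∈ R} - 1 := by
          rw [← card_erase_of_mem (mem_filter.2 ⟨mem_univ _, R.zero_mem⟩)]
          congr 1
          ext z
          simp [and_comm]
      _ ≤ N - 1 := by
          rw [← Nat.card_subtype_eq_card_filter]
          exact Nat.sub_le_sub_right (hN R (mem_filter.1 hR).2) 1

theorem card_subtype_iInf_ne_bot_le {ι : Type*} [Fintype ι]
    (hP : ∀ (g : V ≃ₗ[K] V) R, P R → P (R.map (g : V →ₗ[K] V))) {y : V} (hy : y ≠ 0) :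
    Nat.card {R : ι → Submodule K V // (∀ i, P (R i)) ∧ ⨅ i, R i ≠ ⊥} ≤
      (Nat.card V - 1) * Nat.card {R // P R ∧ y ∈ R} ^ Fintype.card ι := by
  classical
  have := Fintype.ofFinite V
  have := Fintype.ofFinite (Submodule K V)
  rw [Nat.card_subtype_eq_card_filter]
  calc #{R : ι → Submodule K V | (∀ i, P (R i)) ∧ ⨅ i, R i ≠ ⊥}
      ≤ #(({z : V | z ≠ 0} : Finset V).biUnion fun z =>
          Fintype.piFinset fun _ => {R | P R ∧ z ∈ R}) := by
        refine card_le_card fun R hR => ?_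
        obtain ⟨hPR, hR⟩ := (mem_filter.1 hR).2
        obtain ⟨z, hz, hz0⟩ := exists_mem_ne_zero_of_ne_bot hR
        refine mem_biUnion.2 ⟨z, by simpa using hz0, Fintype.mem_piFinset.2 fun i => ?_⟩
        simpa [hPR i] using mem_iInf _ |>.1 hz i
    _ ≤ ∑ z ∈ {z : V | z ≠ 0}, Nat.card {R // P R ∧ z ∈ R} ^ Fintype.card ι := by
        refine card_biUnion_le.trans (sum_le_sum fun z _ => ?_)
        rw [Fintype.card_piFinset, prod_const, card_univ, Nat.card_subtype_eq_card_filter]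
    _ ≤ #{z : V | z ≠ 0} * Nat.card {R // P R ∧ y ∈ R} ^ Fintype.card ι := by
        refine sum_le_card_nsmul _ _ _ fun z hz => ?_
        exact Nat.pow_le_pow_left (card_subtype_mem_le_of_ne_zero hP (mem_filter.1 hz).2 hy) _
    _ = (Nat.card V - 1) * Nat.card {R // P R ∧ y ∈ R} ^ Fintype.card ι := by
        rw [filter_ne', card_erase_of_mem (mem_univ _), card_univ,
          Nat.card_eq_fintype_card (α := V)]

end

theorem div_pow_le_of_le_mul_pow {n a b c s : ℝ} {t : ℕ} (ht : 1 ≤ t) (ha : 0 < a) (hs : 0 < s)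
    (hc : 0 ≤ c) (hn : n ≤ a * c ^ t) (hcs : c * a ≤ s * b) :
    n / s ^ t ≤ b * (b / a) ^ (t - 1) := by
  have hρ : c / s ≤ b / a := by rw [div_le_div_iff₀ hs ha]; linarith
  obtain ⟨t, rfl⟩ := Nat.exists_eq_add_of_le' ht
  calc n / s ^ (t + 1) ≤ a * (c / s) ^ (t + 1) := by
        rw [div_pow, ← mul_div_assoc]; gcongr
    _ ≤ a * (b / a) ^ (t + 1) := by gcongr
    _ = b * (b / a) ^ (t + 1 - 1) := by rw [Nat.add_sub_cancel, pow_succ']; field_simp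

section FiniteField

variable {K V : Type*} [Field K] [Fintype K] [AddCommGroup V] [Module K V] [Module.Finite K V]

theorem cast_natCard_sub_one_eq :
    ((Nat.card V - 1 : ℕ) : ℝ) = (Fintype.card K : ℝ) ^ finrank K V - 1 := by
  rw [natCard_eq_pow_finrank (K := K), Nat.card_eq_fintype_card,
    Nat.cast_sub (Nat.one_le_pow _ _ Fintype.card_pos), Nat.cast_pow, Nat.cast_one]

theorem card_finrank_le_mem_mul_le {y : V} (hy : y ≠ 0) (k : ℕ) :
    (Nat.card {R : Submodule K V // finrank K R ≤ k ∧ y ∈ R} : ℝ) *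
        ((Fintype.card K : ℝ) ^ finrank K V - 1) ≤
      Nat.card {R : Submodule K V // finrank K R ≤ k} * ((Fintype.card K : ℝ) ^ k - 1) := by
  have : Finite V := Module.finite_of_finite K
  have hN (R : Submodule K V) (hR : finrank K R ≤ k) : Nat.card R ≤ Fintype.card K ^ k := by
    rw [natCard_eq_pow_finrank (K := K), Nat.card_eq_fintype_card]
    exact Nat.pow_le_pow_right Fintype.card_pos hR
  have h := card_subtype_mem_mul_le (fun g _ => finrank_map_linearEquiv_le g) hy hN
  rw [← cast_natCard_sub_one_eq, ← Nat.cast_pow,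
    ← Nat.cast_pred (pow_pos Fintype.card_pos _)]
  exact_mod_cast h

theorem card_iInf_finrank_le_ne_bot_le {ι : Type*} [Fintype ι] {y : V} (hy : y ≠ 0) (k : ℕ) :
    (Nat.card {R : ι → Submodule K V // (∀ i, finrank K (R i) ≤ k) ∧ ⨅ i, R i ≠ ⊥} : ℝ) ≤
      ((Fintype.card K : ℝ) ^ finrank K V - 1) *
        Nat.card {R : Submodule K V // finrank K R ≤ k ∧ y ∈ R} ^ Fintype.card ι := by
  have : Finite V := Module.finite_of_finite K
  have h := card_subtype_iInf_ne_bot_le (ι := ι) (P := fun R => finrank K R ≤ k)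
    (fun g _ => finrank_map_linearEquiv_le g) hy
  rw [← cast_natCard_sub_one_eq, ← Nat.cast_pow, ← Nat.cast_mul]
  exact Nat.cast_le.2 h

end FiniteField

theorem stmt18_general (Fq V : Type*) [Field Fq] [Fintype Fq] [AddCommGroup V] [Module Fq V]
    [FiniteDimensional Fq V]
    (m r d t : ℕ) (ht : 1 ≤ t)
    (hV : finrank Fq V = m - r) :
    (Nat.card {R : Fin t → Submodule Fq V //
        (∀ i, finrank Fq (R i) ≤ r * d - r) ∧ (⨅ i, R i) ≠ ⊥} : ℝ)
      / (Nat.card {R : Fin t → Submodule Fq V // ∀ i, finrank Fq (R i) ≤ r * d - r} : ℝ)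
    ≤ ((Fintype.card Fq : ℝ) ^ (r * d - r) - 1)
      * (((Fintype.card Fq : ℝ) ^ (r * d - r) - 1)
          / ((Fintype.card Fq : ℝ) ^ (m - r) - 1)) ^ (t - 1) := by
  set q := Fintype.card Fq
  set k := r * d - r
  rcases subsingleton_or_nontrivial V with _ | _
  · have hk : (1 : ℝ) ≤ (q : ℝ) ^ k := one_le_pow₀ (by exact_mod_cast Fintype.card_pos)
    have : IsEmpty {R : Fin t → Submodule Fq V // (∀ i, finrank Fq (R i) ≤ k) ∧ ⨅ i, R i ≠ ⊥} :=
      ⟨fun R => R.2.2 (Subsingleton.elim _ _)⟩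
    rw [Nat.card_of_isEmpty, Nat.cast_zero, zero_div, ← hV, finrank_zero_of_subsingleton,
      pow_zero, sub_self, div_zero]
    exact mul_nonneg (sub_nonneg.2 hk) (pow_nonneg le_rfl _)
  have : Finite V := Module.finite_of_finite Fq
  obtain ⟨y, hy⟩ := exists_ne (0 : V)
  have : Nonempty {R : Submodule Fq V // finrank Fq R ≤ k} := ⟨⟨⊥, by simp⟩⟩
  have hV1 : (0 : ℝ) < (q : ℝ) ^ finrank Fq V - 1 := by
    rw [← cast_natCard_sub_one_eq (K := Fq), Nat.cast_pos, Nat.sub_pos_iff_lt]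
    exact Finite.one_lt_card
  have hub := card_iInf_finrank_le_ne_bot_le (K := Fq) (ι := Fin t) hy k
  rw [Nat.card_subtype_pi (fun R : Submodule Fq V => finrank Fq R ≤ k), Fintype.card_fin,
    Nat.cast_pow, ← hV]
  rw [Fintype.card_fin] at hub
  exact div_pow_le_of_le_mul_pow ht hV1 (by exact_mod_cast Nat.card_pos) (Nat.cast_nonneg _)
    hub (card_finrank_le_mem_mul_le (K := Fq) hy k)

theorem stmt18 (Fq V : Type*) [Field Fq] [Fintype Fq] [AddCommGroup V] [Module Fq V]
    [FiniteDimensional Fq V]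
    (m r d t : ℕ) (ht : 1 ≤ t) (hrm : r ≤ m)
    (hV : finrank Fq V = m - r) :
    (Nat.card {R : Fin t → Submodule Fq V //
        (∀ i, finrank Fq (R i) ≤ r * d - r) ∧ (⨅ i, R i) ≠ ⊥} : ℝ)
      / (Nat.card {R : Fin t → Submodule Fq V // ∀ i, finrank Fq (R i) ≤ r * d - r} : ℝ)
    ≤ ((Fintype.card Fq : ℝ) ^ (r * d - r) - 1)
      * (((Fintype.card Fq : ℝ) ^ (r * d - r) - 1)
          / ((Fintype.card Fq : ℝ) ^ (m - r) - 1)) ^ (t - 1) :=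
  stmt18_general Fq V m r d t ht hV
end
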